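/- Let (M,d) be an ultrametric space, let A, B be nonempty spherically complete subsets of M with δ(B) ≤ dist(A,B), and let F : A ∪ B → A ∪ B be a noncyclic nonexpansive mapping. Then F(A₀) ⊆ A₀ and F(B₀) ⊆ B₀. -/

import Mathlib

open Metric

variable {M : Type*} [MetricSpace M]

/-- A subset `A` of a metric space is *spherically complete* (as a subspace) if every nested
decreasing sequence of closed balls of the subspace `A` has nonempty intersection. -/
def SphericallyCompleteSet (A : Set M) : Prop :=
  ∀ (c : ℕ → M) (r : ℕ → ℝ), (∀ n, c n ∈ A) → (∀ n, 0 ≤ r n) →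
    (∀ n, A ∩ closedBall (c (n + 1)) (r (n + 1)) ⊆ A ∩ closedBall (c n) (r n)) →
    (A ∩ ⋂ n, closedBall (c n) (r n)).Nonempty

/-- A metric space is *spherically complete* if every nested decreasing sequence of closed
balls has nonempty intersection. -/
def SphericallyCompleteSpace (M : Type*) [MetricSpace M] : Prop :=
  ∀ (c : ℕ → M) (r : ℕ → ℝ), (∀ n, 0 ≤ r n) →
    (∀ n, closedBall (c (n + 1)) (r (n + 1)) ⊆ closedBall (c n) (r n)) →
    (⋂ n, closedBall (c n) (r n)).Nonempty

/-- `dist(A, B) = inf {d(a,b) : a ∈ A, b ∈ B}`. -/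
noncomputable def setDist (A B : Set M) : ℝ :=
  sInf {t : ℝ | ∃ a ∈ A, ∃ b ∈ B, dist a b = t}

/-- A subset `A` is *proximinal* if every point of `M` has a best approximation in `A`. -/
def IsProximinal (A : Set M) : Prop :=
  ∀ x : M, ∃ a ∈ A, dist x a = infDist x A

/-- `A₀ = {x ∈ A : d(x,y) = dist(A,B) for some y ∈ B}`. -/
noncomputable def proxA (A B : Set M) : Set M :=
  {x ∈ A | ∃ y ∈ B, dist x y = setDist A B}

/-- `B₀ = {y ∈ B : d(x,y) = dist(A,B) for some x ∈ A}`. -/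
noncomputable def proxB (A B : Set M) : Set M :=
  {y ∈ B | ∃ x ∈ A, dist x y = setDist A B}

/-- The closed ball `B(c,r)`, `r > 0`, is a *minimal `F`-invariant ball* if `F(B) ⊆ B`
and `d(y, F(y)) = r` for each `y ∈ B`. -/
def IsMinimalInvariantBall (F : M → M) (c : M) (r : ℝ) : Prop :=
  0 < r ∧ Set.MapsTo F (closedBall c r) (closedBall c r) ∧
    ∀ y ∈ closedBall c r, dist y (F y) = r

theorem setDist_le_dist {A B : Set M} {a b : M} (ha : a ∈ A) (hb : b ∈ B) :
    setDist A B ≤ dist a b :=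
  csInf_le ⟨0, by rintro t ⟨a, -, b, -, rfl⟩; exact dist_nonneg⟩ ⟨a, ha, b, hb, rfl⟩

theorem dist_eq_setDist_of_dist_le {A B : Set M} {a b a' b' : M} (ha' : a' ∈ A) (hb' : b' ∈ B)
    (hle : dist a' b' ≤ dist a b) (hab : dist a b = setDist A B) : dist a' b' = setDist A B :=
  le_antisymm (hle.trans hab.le) (setDist_le_dist ha' hb')

section Noncyclic

variable {A B : Set M} {F : M → M} (hFA : Set.MapsTo F A A) (hFB : Set.MapsTo F B B)
  (hF : ∀ x ∈ A, ∀ y ∈ B, dist (F x) (F y) ≤ dist x y)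
include hFA hFB hF

theorem mapsTo_proxA : Set.MapsTo F (proxA A B) (proxA A B) := by
  rintro x ⟨hx, y, hy, hxy⟩
  exact ⟨hFA hx, F y, hFB hy, dist_eq_setDist_of_dist_le (hFA hx) (hFB hy) (hF x hx y hy) hxy⟩

theorem mapsTo_proxB : Set.MapsTo F (proxB A B) (proxB A B) := by
  rintro y ⟨hy, x, hx, hxy⟩
  exact ⟨hFB hy, F x, hFA hx, dist_eq_setDist_of_dist_le (hFA hx) (hFB hy) (hF x hx y hy) hxy⟩

end Noncyclic

theorem prox_invariant_of_noncyclic_nonexpansive_general {M : Type*} [MetricSpace M]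
    (A B : Set M)
    (F : M → M) (hFA : Set.MapsTo F A A) (hFB : Set.MapsTo F B B)
    (hF : ∀ x ∈ A ∪ B, ∀ y ∈ A ∪ B, dist (F x) (F y) ≤ dist x y) :
    Set.MapsTo F (proxA A B) (proxA A B) ∧ Set.MapsTo F (proxB A B) (proxB A B) := by
  have hFAB : ∀ x ∈ A, ∀ y ∈ B, dist (F x) (F y) ≤ dist x y :=
    fun x hx y hy => hF x (.inl hx) y (.inr hy)
  exact ⟨mapsTo_proxA hFA hFB hFAB, mapsTo_proxB hFA hFB hFAB⟩

/-- If `A, B` are nonempty spherically complete subsets with `δ(B) ≤ dist(A,B)` and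
`F : A ∪ B → A ∪ B` is a noncyclic nonexpansive mapping, then `F(A₀) ⊆ A₀` and
`F(B₀) ⊆ B₀`. -/
theorem prox_invariant_of_noncyclic_nonexpansive {M : Type*} [MetricSpace M]
    [IsUltrametricDist M] (A B : Set M) (hA : A.Nonempty) (hB : B.Nonempty)
    (hAsc : SphericallyCompleteSet A) (hBsc : SphericallyCompleteSet B)
    (hδ : ∀ x ∈ B, ∀ y ∈ B, dist x y ≤ setDist A B)
    (F : M → M) (hFA : Set.MapsTo F A A) (hFB : Set.MapsTo F B B)
    (hF : ∀ x ∈ A ∪ B, ∀ y ∈ A ∪ B, dist (F x) (F y) ≤ dist x y) :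
    Set.MapsTo F (proxA A B) (proxA A B) ∧ Set.MapsTo F (proxB A B) (proxB A B) :=
  prox_invariant_of_noncyclic_nonexpansive_general A B F hFA hFB hF
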